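/- Let f₁, f₂ be functions of x ∼ D and suppose u₁(x) and u₂(x) are both 0-intersections of f₁(x) and f₂(x). Then there exists a function s₁ with s₁(u₁(x)) = u₂(x) for all x in the support of D, and s₁ is invertible on the relevant ranges with inverse s₂ satisfying s₂(u₂(x)) = u₁(x). That is, the 0-intersection of two random variables is unique up to invertible transformation. -/

import Mathlib

open scoped Classical

/-- Probability of an event under distribution `D` on a finite sample space. -/
noncomputable def pr {Ω : Type*} [Fintype Ω] (D : Ω → ℝ) (p : Ω → Prop) : ℝ :=
  ∑ x, if p x then D x else 0

/-- Shannon entropy (base 2) of a random variable `f` under `D`. -/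
noncomputable def ent {Ω A : Type*} [Fintype Ω] (D : Ω → ℝ) (f : Ω → A) : ℝ :=
  -∑ a ∈ Finset.image f Finset.univ,
      pr D (fun x => f x = a) * Real.logb 2 (pr D (fun x => f x = a))

/-- Mutual information (base 2) between random variables `f` and `g` under `D`. -/
noncomputable def mi {Ω A B : Type*} [Fintype Ω] (D : Ω → ℝ) (f : Ω → A) (g : Ω → B) : ℝ :=
  ent D f + ent D g - ent D (fun x => (f x, g x))

/-- Binary entropy function (base 2). -/
noncomputable def binEnt (p : ℝ) : ℝ := -(p * Real.logb 2 p) - (1 - p) * Real.logb 2 (1 - p)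

/-- `D` is a probability distribution. -/
def IsProb {Ω : Type*} [Fintype Ω] (D : Ω → ℝ) : Prop :=
  (∀ x, 0 ≤ D x) ∧ ∑ x, D x = 1

section Aux
variable {Ω A B : Type*} [Fintype Ω]

lemma pr_nonneg (D : Ω → ℝ) (hD0 : ∀ x, 0 ≤ D x) (p : Ω → Prop) : 0 ≤ pr D p :=
  Finset.sum_nonneg fun x _ => by by_cases h : p x <;> simp [h, hD0 x]

lemma exists_of_pr_ne_zero {D : Ω → ℝ} {p : Ω → Prop} (h : pr D p ≠ 0) :
    ∃ x, D x ≠ 0 ∧ p x := by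
  by_contra hc
  push_neg at hc
  apply h
  refine Finset.sum_eq_zero fun x _ => ?_
  by_cases hp : p x
  · simp [hp, not_not.mp (fun hD => hc x hD hp)]
  · simp [hp]

lemma pr_pos_of_mem {D : Ω → ℝ} (hD0 : ∀ x, 0 ≤ D x) {p : Ω → Prop} {x : Ω}
    (hx : D x ≠ 0) (hp : p x) : 0 < pr D p := by
  have h1 : D x ≤ pr D p := by
    have := Finset.single_le_sum (f := fun z => if p z then D z else 0)
      (fun z _ => by by_cases h : p z <;> simp [h, hD0 z]) (Finset.mem_univ x)
    simpa [hp, pr] using this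
  exact lt_of_lt_of_le (lt_of_le_of_ne (hD0 x) (Ne.symm hx)) h1

lemma pr_marginal_left (D : Ω → ℝ) (g : Ω → A) (h : Ω → B) (a : A) :
    pr D (fun x => g x = a)
      = ∑ b ∈ Finset.image h Finset.univ, pr D (fun x => (g x, h x) = (a, b)) := by
  unfold pr
  rw [Finset.sum_comm]
  refine Finset.sum_congr rfl fun x _ => ?_
  simp only [Prod.mk.injEq]
  by_cases hga : g x = a
  · simp [hga, Finset.sum_ite_eq, Finset.mem_image]
  · simp [hga]

lemma pr_marginal_right (D : Ω → ℝ) (g : Ω → A) (h : Ω → B) (b : B) :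
    pr D (fun x => h x = b)
      = ∑ a ∈ Finset.image g Finset.univ, pr D (fun x => (g x, h x) = (a, b)) := by
  unfold pr
  rw [Finset.sum_comm]
  refine Finset.sum_congr rfl fun x _ => ?_
  simp only [Prod.mk.injEq]
  by_cases hhb : h x = b
  · simp [hhb, Finset.sum_ite_eq, Finset.mem_image]
  · simp [hhb]

lemma pr_pair_sum (D : Ω → ℝ) (hD : IsProb D) (g : Ω → A) (h : Ω → B) :
    ∑ c ∈ Finset.image g Finset.univ ×ˢ Finset.image h Finset.univ,
      pr D (fun x => (g x, h x) = c) = 1 := by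
  unfold pr
  rw [Finset.sum_comm]
  rw [← hD.2]
  refine Finset.sum_congr rfl fun x _ => ?_
  have hmem : (g x, h x) ∈ Finset.image g Finset.univ ×ˢ Finset.image h Finset.univ := by
    simp [Finset.mem_product]
  refine (Finset.sum_eq_single_of_mem _ hmem fun c _ hc => if_neg (Ne.symm hc)).trans (by simp)

lemma ent_eq_sum_superset (D : Ω → ℝ) (f : Ω → A) (s : Finset A)
    (hs' : ∀ x, f x ∈ s) :
    ent D f = -∑ a ∈ s, pr D (fun x => f x = a) * Real.logb 2 (pr D (fun x => f x = a)) := by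
  unfold ent
  congr 1
  have hs : Finset.image f Finset.univ ⊆ s := by
    intro a ha
    obtain ⟨z, _, hz⟩ := Finset.mem_image.mp ha
    exact hz ▸ hs' z
  refine Finset.sum_subset hs fun a _ ha => ?_
  have h0 : pr D (fun x => f x = a) = 0 := by
    refine Finset.sum_eq_zero fun x _ => ?_
    have : f x ≠ a := fun hfa => ha (Finset.mem_image.mpr ⟨x, Finset.mem_univ x, hfa⟩)
    simp [this]
  simp [h0]

lemma gibbs_pointwise {r p q : ℝ} (hr : 0 ≤ r) (hrp : r ≤ p) (hrq : r ≤ q) (hq : 0 ≤ q) :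
    r * (Real.log p + Real.log q - Real.log r) ≤ p * q - r := by
  rcases eq_or_lt_of_le hr with h0 | h0
  · rw [← h0]
    have : 0 ≤ p * q := mul_nonneg (le_trans hr hrp) hq
    simpa using this
  · have hp : 0 < p := lt_of_lt_of_le h0 hrp
    have hq' : 0 < q := lt_of_lt_of_le h0 hrq
    have hpq : 0 < p * q := mul_pos hp hq'
    have hlog := Real.log_le_sub_one_of_pos (show 0 < p * q / r by positivity)
    rw [Real.log_div hpq.ne' h0.ne', Real.log_mul hp.ne' hq'.ne'] at hlog
    have h2 : r * (Real.log p + Real.log q - Real.log r) ≤ r * (p * q / r - 1) :=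
      mul_le_mul_of_nonneg_left hlog hr
    calc r * (Real.log p + Real.log q - Real.log r) ≤ r * (p * q / r - 1) := h2
      _ = p * q - r := by field_simp

end Aux

section Main
variable {Ω A B : Type*} [Fintype Ω]

lemma mi_zero_indep (D : Ω → ℝ) (hD : IsProb D) (g : Ω → A) (h : Ω → B)
    (hmi : mi D g h = 0) {x y : Ω} (hx : D x ≠ 0) (hy : D y ≠ 0) :
    ∃ z, D z ≠ 0 ∧ g z = g x ∧ h z = h y := by
  classical
  set A' := Finset.image g Finset.univ with hA'
  set B' := Finset.image h Finset.univ with hB'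
  set P : A → ℝ := fun a => pr D (fun z => g z = a) with hP
  set Q : B → ℝ := fun b => pr D (fun z => h z = b) with hQ
  set R : A × B → ℝ := fun c => pr D (fun z => (g z, h z) = c) with hRdef
  have hR0 : ∀ c, 0 ≤ R c := fun c => pr_nonneg D hD.1 _
  have hmargP : ∀ a, P a = ∑ b ∈ B', R (a, b) := fun a => pr_marginal_left D g h a
  have hmargQ : ∀ b, Q b = ∑ a ∈ A', R (a, b) := fun b => pr_marginal_right D g h b
  have hone : ∑ c ∈ A' ×ˢ B', R c = 1 := pr_pair_sum D hD g h
  have hPsum : ∑ a ∈ A', P a = 1 := by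
    rw [Finset.sum_congr rfl fun a _ => hmargP a, ← Finset.sum_product]
    exact hone
  have hQsum : ∑ b ∈ B', Q b = 1 := by
    rw [Finset.sum_congr rfl fun b _ => hmargQ b, Finset.sum_comm, ← Finset.sum_product]
    exact hone
  have hRP : ∀ c ∈ A' ×ˢ B', R c ≤ P c.1 := by
    intro c hc
    rw [hmargP c.1]
    have := Finset.single_le_sum (f := fun b => R (c.1, b))
      (fun b _ => hR0 _) (Finset.mem_product.mp hc).2
    simpa using this
  have hRQ : ∀ c ∈ A' ×ˢ B', R c ≤ Q c.2 := by
    intro c hc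
    rw [hmargQ c.2]
    have := Finset.single_le_sum (f := fun a => R (a, c.2))
      (fun a _ => hR0 _) (Finset.mem_product.mp hc).1
    simpa using this
  have hentg : ent D g = -∑ c ∈ A' ×ˢ B', R c * Real.logb 2 (P c.1) := by
    have h1 : ent D g = -∑ a ∈ A', P a * Real.logb 2 (P a) := rfl
    rw [h1]
    congr 1
    rw [Finset.sum_product]
    dsimp only
    exact Finset.sum_congr rfl fun a _ => by rw [← Finset.sum_mul, ← hmargP a]
  have henth : ent D h = -∑ c ∈ A' ×ˢ B', R c * Real.logb 2 (Q c.2) := by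
    have h1 : ent D h = -∑ b ∈ B', Q b * Real.logb 2 (Q b) := rfl
    rw [h1]
    congr 1
    rw [Finset.sum_product_right]
    dsimp only
    exact Finset.sum_congr rfl fun b _ => by rw [← Finset.sum_mul, ← hmargQ b]
  have hsub : ∀ z, (g z, h z) ∈ A' ×ˢ B' := fun z =>
    Finset.mem_product.mpr ⟨Finset.mem_image_of_mem g (Finset.mem_univ z),
      Finset.mem_image_of_mem h (Finset.mem_univ z)⟩
  have hentgh : ent D (fun z => (g z, h z)) = -∑ c ∈ A' ×ˢ B', R c * Real.logb 2 (R c) :=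
    ent_eq_sum_superset D _ _ hsub
  have hsum0 : ∑ c ∈ A' ×ˢ B',
      (R c * Real.logb 2 (P c.1) + R c * Real.logb 2 (Q c.2) - R c * Real.logb 2 (R c)) = 0 := by
    have hm := hmi
    unfold mi at hm
    rw [hentg, henth, hentgh] at hm
    rw [Finset.sum_sub_distrib, Finset.sum_add_distrib]
    linarith
  have hlog2 : Real.log 2 ≠ 0 := (Real.log_pos (by norm_num)).ne'
  have hlogb : ∀ t : ℝ, Real.log t = Real.log 2 * Real.logb 2 t := by
    intro t
    rw [Real.logb]
    field_simp
  have hL0 : ∑ c ∈ A' ×ˢ B',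
      (R c * (Real.log (P c.1) + Real.log (Q c.2) - Real.log (R c))) = 0 := by
    have : ∀ c, R c * (Real.log (P c.1) + Real.log (Q c.2) - Real.log (R c))
        = Real.log 2 * (R c * Real.logb 2 (P c.1) + R c * Real.logb 2 (Q c.2)
            - R c * Real.logb 2 (R c)) := by
      intro c
      rw [hlogb (P c.1), hlogb (Q c.2), hlogb (R c)]
      ring
    rw [Finset.sum_congr rfl fun c _ => this c, ← Finset.mul_sum, hsum0, mul_zero]
  have hGsum : ∑ c ∈ A' ×ˢ B', (P c.1 * Q c.2 - R c) = 0 := by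
    rw [Finset.sum_sub_distrib, hone, Finset.sum_product]
    have : ∑ a ∈ A', ∑ b ∈ B', P a * Q b = (∑ a ∈ A', P a) * (∑ b ∈ B', Q b) := by
      rw [Finset.sum_mul_sum]
    rw [this, hPsum, hQsum]
    norm_num
  have hpw : ∀ c ∈ A' ×ˢ B',
      R c * (Real.log (P c.1) + Real.log (Q c.2) - Real.log (R c)) ≤ P c.1 * Q c.2 - R c :=
    fun c hc => gibbs_pointwise (hR0 c) (hRP c hc) (hRQ c hc) (pr_nonneg D hD.1 _)
  have heq := (Finset.sum_eq_sum_iff_of_le hpw).mp (hL0.trans hGsum.symm)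
  have hc0 : (g x, h y) ∈ A' ×ˢ B' :=
    Finset.mem_product.mpr ⟨Finset.mem_image_of_mem g (Finset.mem_univ x),
      Finset.mem_image_of_mem h (Finset.mem_univ y)⟩
  have hPx : 0 < P (g x) := pr_pos_of_mem hD.1 hx rfl
  have hQy : 0 < Q (h y) := pr_pos_of_mem hD.1 hy rfl
  have hRne : R (g x, h y) ≠ 0 := by
    intro hR0c
    have := heq (g x, h y) hc0
    rw [hR0c] at this
    simp only [zero_mul] at this
    have hpos : 0 < P (g x) * Q (h y) := mul_pos hPx hQy
    simp at this
    rcases this with h' | h' <;> linarith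
  obtain ⟨z, hz, hgz⟩ := exists_of_pr_ne_zero hRne
  exact ⟨z, hz, congrArg Prod.fst hgz, congrArg Prod.snd hgz⟩

end Main

lemma common_part_unique {Ω X₁ X₂ E U V : Type*} [Fintype Ω]
    (D : Ω → ℝ) (hD : IsProb D)
    (f₁ : Ω → X₁) (f₂ : Ω → X₂) (u : Ω → U) (v : Ω → V) (e : Ω → E)
    (r : X₁ → E × U) (hr : Function.Injective r)
    (hdec : ∀ x, r (f₁ x) = (e x, u x))
    (hu₂ : ∀ x y, f₂ x = f₂ y → u x = u y)
    (hv₁ : ∀ x y, f₁ x = f₁ y → v x = v y)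
    (hv₂ : ∀ x y, f₂ x = f₂ y → v x = v y)
    (hind : mi D e f₂ = 0) :
    ∀ x y, D x ≠ 0 → D y ≠ 0 → u x = u y → v x = v y := by
  intro x y hx hy huv
  obtain ⟨w, hw, hew, hfw⟩ := mi_zero_indep D hD e f₂ hind hy hx
  have huw : u w = u x := hu₂ w x hfw
  have hrw : r (f₁ w) = r (f₁ y) := by rw [hdec, hdec, hew, huw, huv]
  have hvwy : v w = v y := hv₁ w y (hr hrw)
  have hvwx : v w = v x := hv₂ w x hfw
  rw [← hvwx, hvwy]


/-- Uniqueness of the `0`-intersection: if `u₁` and `u₂` are both `0`-intersections of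
`f₁` and `f₂`, then there are mutually inverse maps identifying `u₁(x)` with `u₂(x)`
on the support of `D`. -/
theorem zero_intersection_unique
    {Ω X₁ X₂ E₁ E₂ E₁' E₂' U₁ U₂ : Type*} [Fintype Ω]
    (D : Ω → ℝ) (hD : IsProb D)
    (f₁ : Ω → X₁) (f₂ : Ω → X₂)
    (u₁ : Ω → U₁) (u₂ : Ω → U₂)
    (e₁₁ : Ω → E₁) (e₂₁ : Ω → E₂) (e₁₂ : Ω → E₁') (e₂₂ : Ω → E₂')
    (r₁₁ : X₁ → E₁ × U₁) (r₂₁ : X₂ → E₂ × U₁) (r₁₂ : X₁ → E₁' × U₂) (r₂₂ : X₂ → E₂' × U₂)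
    (hr₁₁ : Function.Bijective r₁₁) (hr₂₁ : Function.Bijective r₂₁)
    (hr₁₂ : Function.Bijective r₁₂) (hr₂₂ : Function.Bijective r₂₂)
    (hdec₁₁ : ∀ x, r₁₁ (f₁ x) = (e₁₁ x, u₁ x)) (hdec₂₁ : ∀ x, r₂₁ (f₂ x) = (e₂₁ x, u₁ x))
    (hdec₁₂ : ∀ x, r₁₂ (f₁ x) = (e₁₂ x, u₂ x)) (hdec₂₂ : ∀ x, r₂₂ (f₂ x) = (e₂₂ x, u₂ x))
    (hind₁₁ : mi D e₁₁ f₂ = 0) (hind₂₁ : mi D e₂₁ f₁ = 0)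
    (hind₁₂ : mi D e₁₂ f₂ = 0) (hind₂₂ : mi D e₂₂ f₁ = 0) :
    ∃ (s₁ : U₁ → U₂) (s₂ : U₂ → U₁),
      (∀ x, D x ≠ 0 → s₁ (u₁ x) = u₂ x) ∧
      (∀ x, D x ≠ 0 → s₂ (u₂ x) = u₁ x) := by
  classical
  have hu₁f₂ : ∀ x y, f₂ x = f₂ y → u₁ x = u₁ y := fun x y hf => by
    have := (hdec₂₁ x).symm.trans (hf ▸ hdec₂₁ y)
    exact congrArg Prod.snd this
  have hu₂f₂ : ∀ x y, f₂ x = f₂ y → u₂ x = u₂ y := fun x y hf => by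
    have := (hdec₂₂ x).symm.trans (hf ▸ hdec₂₂ y)
    exact congrArg Prod.snd this
  have hu₁f₁ : ∀ x y, f₁ x = f₁ y → u₁ x = u₁ y := fun x y hf => by
    have := (hdec₁₁ x).symm.trans (hf ▸ hdec₁₁ y)
    exact congrArg Prod.snd this
  have hu₂f₁ : ∀ x y, f₁ x = f₁ y → u₂ x = u₂ y := fun x y hf => by
    have := (hdec₁₂ x).symm.trans (hf ▸ hdec₁₂ y)
    exact congrArg Prod.snd this
  have claim1 : ∀ x y, D x ≠ 0 → D y ≠ 0 → u₁ x = u₁ y → u₂ x = u₂ y :=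
    common_part_unique D hD f₁ f₂ u₁ u₂ e₁₁ r₁₁ hr₁₁.injective hdec₁₁
      hu₁f₂ hu₂f₁ hu₂f₂ hind₁₁
  have claim2 : ∀ x y, D x ≠ 0 → D y ≠ 0 → u₂ x = u₂ y → u₁ x = u₁ y :=
    common_part_unique D hD f₁ f₂ u₂ u₁ e₁₂ r₁₂ hr₁₂.injective hdec₁₂
      hu₂f₂ hu₁f₁ hu₁f₂ hind₁₂
  have hne : ∃ x0 : Ω, D x0 ≠ 0 := by
    by_contra hc
    push_neg at hc
    have h1 := hD.2
    simp only [hc] at h1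
    simp at h1
  obtain ⟨x0, hx0⟩ := hne
  refine ⟨fun w => if h : ∃ z, D z ≠ 0 ∧ u₁ z = w then u₂ h.choose else u₂ x0,
          fun w => if h : ∃ z, D z ≠ 0 ∧ u₂ z = w then u₁ h.choose else u₁ x0, ?_, ?_⟩
  · intro x hx
    have hex : ∃ z, D z ≠ 0 ∧ u₁ z = u₁ x := ⟨x, hx, rfl⟩
    dsimp only
    rw [dif_pos hex]
    exact claim1 hex.choose x hex.choose_spec.1 hx hex.choose_spec.2
  · intro x hx
    have hex : ∃ z, D z ≠ 0 ∧ u₂ z = u₂ x := ⟨x, hx, rfl⟩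
    dsimp only
    rw [dif_pos hex]
    exact claim2 hex.choose x hex.choose_spec.1 hx hex.choose_spec.2
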